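/- Let (R,m) be a one-dimensional Cohen–Macaulay local ring and let I, J be stable regular ideals. Then tr(IJ) ≅ Hom_R(I, tr(J)) as R-modules. -/

import Mathlib

open nonZeroDivisors IsLocalRing

/-- The trace ideal of an `R`-module `M`. -/
noncomputable def traceIdeal (R : Type*) [CommRing R] (M : Type*) [AddCommGroup M]
    [Module R M] : Ideal R :=
  ⨆ f : M →ₗ[R] R, LinearMap.range f

/-! If `J ^ 2 = y J` for a nonzerodivisor `y ∈ J`, evaluation at `y` embeds `J*` into `R` with
image `tr J`: for `g ∈ J*` and `m ∈ J` the form `j ↦ j g(m) / y` is defined, since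
`j g(m) = g(j m) ∈ g(y J) ⊆ y R`, and takes the value `g(m)` at `y`. If `x ∈ I` is a
nonzerodivisor, every bilinear form `b` on `I × J` factors through the multiplication
`I ⊗ J → I J` as `z ↦ b(x, z) / x`, because `b(x, i j) = i b(x, j) = x b(i, j)`; hence
`(I J)* ≅ Hom(I, J*)`. As `I J` is stable again, `tr(I J) ≅ (I J)* ≅ Hom(I, J*) ≅ Hom(I, tr J)`. -/

section

variable {R M : Type*} [CommRing R] [AddCommGroup M] [Module R M]

theorem LinearMap.exists_smul_eq_of_range_le_span_singleton {x : R} (hx : x ∈ R⁰)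
    (f : M →ₗ[R] R) (hf : LinearMap.range f ≤ Ideal.span {x}) : ∃ g : M →ₗ[R] R, x • g = f := by
  have hinj : Function.Injective (LinearMap.toSpanSingleton R R x) := fun a b hab =>
    (mul_cancel_right_mem_nonZeroDivisors hx).mp hab
  have hf' : LinearMap.range f ≤ LinearMap.range (LinearMap.toSpanSingleton R R x) := by
    rwa [← LinearMap.span_singleton_eq_range]
  let f' := f.codRestrict _ fun m => hf' (LinearMap.mem_range_self f m)
  refine ⟨(LinearEquiv.ofInjective _ hinj).symm.toLinearMap ∘ₗ f', LinearMap.ext fun m => ?_⟩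
  have hdiv : LinearMap.toSpanSingleton R R x ((LinearEquiv.ofInjective _ hinj).symm (f' m)) =
      f' m := LinearEquiv.ofInjective_symm_apply _ (f' m)
  rwa [LinearMap.toSpanSingleton_apply, smul_eq_mul, mul_comm] at hdiv

namespace Ideal

variable {I J : Ideal R} {x y : R}

theorem coe_smul_apply_comm (g : J →ₗ[R] M) (a b : J) : (a : R) • g b = (b : R) • g a := by
  rw [← map_smul, ← map_smul]
  congr 1
  exact Subtype.ext (mul_comm _ _)

theorem applyₗ_injective (hyJ : y ∈ J) (hy : y ∈ R⁰) :
    Function.Injective (LinearMap.applyₗ (R := R) (M₂ := R) (⟨y, hyJ⟩ : J)) := by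
  rw [← LinearMap.ker_eq_bot, LinearMap.ker_eq_bot']
  intro f (hf : f ⟨y, hyJ⟩ = 0)
  ext j
  refine (mul_cancel_left_mem_nonZeroDivisors hy).mp ?_
  simpa [hf] using coe_smul_apply_comm f ⟨y, hyJ⟩ j

theorem range_applyₗ_eq_traceIdeal (hyJ : y ∈ J) (hy : y ∈ R⁰) (hJ : J ^ 2 = span {y} * J) :
    LinearMap.range (LinearMap.applyₗ (R := R) (M₂ := R) (⟨y, hyJ⟩ : J)) = traceIdeal R J := by
  refine le_antisymm ?_ (iSup_le fun g => ?_)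
  · rintro _ ⟨f, rfl⟩
    exact Submodule.mem_iSup_of_mem f (LinearMap.mem_range_self f _)
  · rintro _ ⟨m, rfl⟩
    have hdvd : LinearMap.range (g m • J.subtype) ≤ span {y} := by
      rintro _ ⟨j, rfl⟩
      have hjm : (j : R) * m ∈ span {y} * J := hJ ▸ pow_two J ▸ mul_mem_mul j.2 m.2
      obtain ⟨u, hu, hyu⟩ := mem_span_singleton_mul.mp hjm
      have hjm_eq : (j : R) • m = y • (⟨u, hu⟩ : J) := Subtype.ext hyu.symm
      have hgjm : g m * j = y * g ⟨u, hu⟩ := by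
        rw [mul_comm, ← smul_eq_mul, ← map_smul, hjm_eq, map_smul, smul_eq_mul]
      exact mem_span_singleton.mpr ⟨_, hgjm⟩
    obtain ⟨f, hf⟩ := LinearMap.exists_smul_eq_of_range_le_span_singleton hy _ hdvd
    refine ⟨f, (mul_cancel_left_mem_nonZeroDivisors hy).mp ?_⟩
    simpa [mul_comm] using LinearMap.congr_fun hf ⟨y, hyJ⟩

noncomputable def dualEquivTraceIdeal (hyJ : y ∈ J) (hy : y ∈ R⁰) (hJ : J ^ 2 = span {y} * J) :
    (J →ₗ[R] R) ≃ₗ[R] traceIdeal R J :=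
  (LinearEquiv.ofInjective _ (applyₗ_injective hyJ hy)).trans
    (LinearEquiv.ofEq _ _ (range_applyₗ_eq_traceIdeal hyJ hy hJ))

theorem lcomp_mulMap'_bijective (J : Ideal R) (hxI : x ∈ I) (hx : x ∈ R⁰) :
    Function.Bijective (LinearMap.lcomp R R (Submodule.mulMap' I J)) := by
  have hsurj := Submodule.mulMap'_surjective I J
  refine ⟨fun f g hfg => (LinearMap.cancel_right hsurj).mp hfg, fun b => ?_⟩
  let c := (TensorProduct.lift.equiv (RingHom.id R) I J R).symm b
  let h : (I * J : Ideal R) →ₗ[R] R := c ⟨x, hxI⟩ ∘ₗ Submodule.inclusion mul_le_right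
  have hcomp : h ∘ₗ Submodule.mulMap' I J = x • b := by
    refine TensorProduct.ext' fun i j => ?_
    calc h (Submodule.mulMap' I J (i ⊗ₜ j)) = (i : R) • c ⟨x, hxI⟩ j :=
          map_smul (c ⟨x, hxI⟩) (i : R) j
      _ = x • c i j := LinearMap.congr_fun (coe_smul_apply_comm c i ⟨x, hxI⟩) j
      _ = (x • b) (i ⊗ₜ j) := rfl
  have hdvd : LinearMap.range h ≤ span {x} := by
    rw [← LinearMap.range_comp_of_range_eq_top h (LinearMap.range_eq_top.mpr hsurj), hcomp]
    rintro _ ⟨t, rfl⟩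
    exact mem_span_singleton.mpr (dvd_mul_right x (b t))
  obtain ⟨f, hf⟩ := LinearMap.exists_smul_eq_of_range_le_span_singleton hx h hdvd
  refine ⟨f, TensorProduct.ext' fun i j => (mul_cancel_left_mem_nonZeroDivisors hx).mp ?_⟩
  rw [← hf] at hcomp
  exact LinearMap.congr_fun hcomp (i ⊗ₜ j)

noncomputable def dualMulEquivHomDual (J : Ideal R) (hxI : x ∈ I) (hx : x ∈ R⁰) :
    (I * J →ₗ[R] R) ≃ₗ[R] (I →ₗ[R] J →ₗ[R] R) :=
  (LinearEquiv.ofBijective _ (lcomp_mulMap'_bijective J hxI hx)).trans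
    (TensorProduct.lift.equiv (RingHom.id R) I J R).symm

theorem mul_sq_eq_span_singleton_mul (hI : I ^ 2 = span {x} * I) (hJ : J ^ 2 = span {y} * J) :
    (I * J) ^ 2 = span {x * y} * (I * J) := by
  rw [mul_pow, hI, hJ, ← span_singleton_mul_span_singleton]
  ring

end Ideal

end

theorem trace_mul_iso_hom (R : Type*) [CommRing R]
    (I J : Ideal R)
    (hIstable : ∃ x ∈ I, x ∈ R⁰ ∧ I ^ 2 = Ideal.span {x} * I)
    (hJstable : ∃ y ∈ J, y ∈ R⁰ ∧ J ^ 2 = Ideal.span {y} * J) :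
    Nonempty ((traceIdeal R (I * J : Ideal R)) ≃ₗ[R] (I →ₗ[R] traceIdeal R J)) := by
  obtain ⟨x, hxI, hx, hI⟩ := hIstable
  obtain ⟨y, hyJ, hy, hJ⟩ := hJstable
  have hIJ := Ideal.mul_sq_eq_span_singleton_mul hI hJ
  exact ⟨(Ideal.dualEquivTraceIdeal (Ideal.mul_mem_mul hxI hyJ) (mul_mem hx hy) hIJ).symm ≪≫ₗ
    Ideal.dualMulEquivHomDual J hxI hx ≪≫ₗ
    LinearEquiv.congrRight (Ideal.dualEquivTraceIdeal hyJ hy hJ)⟩
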